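/- arXiv:2301.00587 — 10 statements merged into one kernel-verified Lean document; each statement's English description precedes it below -/
import Mathlib

section
/- Let x̲ ≤ x̄ and y̲ ≤ ȳ be real numbers and let B = [x̲, x̄] × [y̲, ȳ] ⊆ ℝ². If φ : ℝ² → ℝ is convex on B and satisfies φ(x, y) ≤ x·y for all (x, y) ∈ B, then φ(x, y) ≤ max(x̲·y + y̲·x − x̲·y̲, x̄·y + ȳ·x − x̄·ȳ) for all (x, y) ∈ B. That is, the pointwise maximum of the two McCormick underestimators is the convex envelope of the bilinear function (x, y) ↦ x·y over the box B. -/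
/-!
The McCormick underestimators are the tangent planes of `x * y` at the corners `(xl, yl)` and
`(xu, yu)`, and `x * y - tangentPlane a b (x, y) = (x - a) * (y - b)`. So the tangent plane at a
corner agrees with `x * y` on the two edges of the box through that corner, in particular at the
three vertices of the triangle cut off by the diagonal from `(xu, yl)` to `(xl, yu)`. There
`φ ≤ x * y` is thus `φ ≤ tangentPlane`, and since `φ - tangentPlane` is convex, the maximum
principle spreads this inequality over the whole triangle. The two triangles cover the box.
-/

open Set

section

variable {𝕜 E : Type*} [Field 𝕜] [LinearOrder 𝕜] [IsStrictOrderedRing 𝕜] [AddCommGroup E]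
  [Module 𝕜 E]

theorem ConvexOn.le_of_mem_convexHull_of_le {β : Type*} [AddCommGroup β] [LinearOrder β]
    [IsOrderedAddMonoid β] [Module 𝕜 β] [IsStrictOrderedModule 𝕜 β] {s t : Set E} {f g : E → β}
    {x : E} (hf : ConvexOn 𝕜 s f) (hg : ConcaveOn 𝕜 s g) (hts : t ⊆ s)
    (hle : ∀ y ∈ t, f y ≤ g y) (hx : x ∈ convexHull 𝕜 t) : f x ≤ g x := by
  obtain ⟨y, hy, hxy⟩ := (hf.sub hg).exists_ge_of_mem_convexHull hts hx
  simpa using hxy.trans (sub_nonpos.2 (hle y hy))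

theorem add_smul_sub_add_smul_sub_mem_convexHull (a b c : E) {s t : 𝕜}
    (hs : 0 ≤ s) (ht : 0 ≤ t) (hst : s + t ≤ 1) :
    a + s • (b - a) + t • (c - a) ∈ convexHull 𝕜 {a, b, c} := by
  have key := (convex_convexHull 𝕜 {a, b, c}).sum_mem (t := Finset.univ)
    (w := ![1 - s - t, s, t]) (z := ![a, b, c])
    (by intro i _; fin_cases i <;> simp <;> linarith) (by simp [Fin.sum_univ_three]; ring)
    (by intro i _; fin_cases i <;> apply subset_convexHull <;> simp)
  convert key using 1
  simp only [Fin.sum_univ_three, Matrix.cons_val_zero, Matrix.cons_val_one, Matrix.cons_val_two,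
    Matrix.tail_cons, Matrix.head_cons]
  module

end

def tangentPlane (a b : ℝ) (p : ℝ × ℝ) : ℝ := a * p.2 + b * p.1 - a * b

theorem mul_sub_tangentPlane (a b : ℝ) (p : ℝ × ℝ) :
    p.1 * p.2 - tangentPlane a b p = (p.1 - a) * (p.2 - b) := by
  unfold tangentPlane; ring

theorem concaveOn_tangentPlane (a b : ℝ) {s : Set (ℝ × ℝ)} (hs : Convex ℝ s) :
    ConcaveOn ℝ s (tangentPlane a b) :=
  ⟨hs, fun p _ q _ u v _ _ huv => by
    simp only [tangentPlane, Prod.fst_add, Prod.snd_add, Prod.smul_fst, Prod.smul_snd, smul_eq_mul]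
    exact le_of_eq (by linear_combination (-(a * b)) * huv)⟩

theorem tangentPlane_eq_mul {a b : ℝ} {p : ℝ × ℝ} (hp : p.1 = a ∨ p.2 = b) :
    tangentPlane a b p = p.1 * p.2 := by
  have : (p.1 - a) * (p.2 - b) = 0 := mul_eq_zero.2 (hp.imp sub_eq_zero.2 sub_eq_zero.2)
  linarith [mul_sub_tangentPlane a b p]

theorem ConvexOn.le_tangentPlane_of_mem_convexHull {s : Set (ℝ × ℝ)} {φ : ℝ × ℝ → ℝ}
    (hφ : ConvexOn ℝ s φ) (hle : ∀ p ∈ s, φ p ≤ p.1 * p.2) {a a' b b' : ℝ}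
    (h₀ : (a, b) ∈ s) (h₁ : (a', b) ∈ s) (h₂ : (a, b') ∈ s) {p : ℝ × ℝ}
    (hp : p ∈ convexHull ℝ {(a, b), (a', b), (a, b')}) : φ p ≤ tangentPlane a b p := by
  refine hφ.le_of_mem_convexHull_of_le (concaveOn_tangentPlane a b hφ.1) ?_ ?_ hp
  · simp [insert_subset_iff, h₀, h₁, h₂]
  · rintro v hv
    rw [tangentPlane_eq_mul (by aesop)]
    exact hle v (by aesop)

theorem exists_add_mul_sub_eq_of_mem_Icc {x a b : ℝ} (hx : x ∈ Icc a b) :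
    ∃ s ∈ Icc (0 : ℝ) 1, a + s * (b - a) = x := by
  simpa [segment_eq_image'] using Icc_subset_segment (𝕜 := ℝ) hx

theorem Icc_prod_Icc_subset_convexHull_union_convexHull (xl xu yl yu : ℝ) :
    Icc xl xu ×ˢ Icc yl yu ⊆ convexHull ℝ {(xl, yl), (xu, yl), (xl, yu)} ∪
      convexHull ℝ {(xu, yu), (xl, yu), (xu, yl)} := by
  rintro ⟨x, y⟩ ⟨hx, hy⟩
  obtain ⟨s, ⟨hs₀, hs₁⟩, rfl⟩ := exists_add_mul_sub_eq_of_mem_Icc hx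
  obtain ⟨t, ⟨ht₀, ht₁⟩, rfl⟩ := exists_add_mul_sub_eq_of_mem_Icc hy
  rcases le_total (s + t) 1 with hst | hst
  · left
    convert add_smul_sub_add_smul_sub_mem_convexHull (xl, yl) (xu, yl) (xl, yu) hs₀ ht₀ hst
      using 1
    ext <;> simp
  · right
    convert add_smul_sub_add_smul_sub_mem_convexHull (xu, yu) (xl, yu) (xu, yl)
      (sub_nonneg.2 hs₁) (sub_nonneg.2 ht₁) (by linarith) using 1
    ext <;> simp <;> ring

theorem mccormick_convex_envelope_general
    (xl xu yl yu : ℝ)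
    (φ : ℝ × ℝ → ℝ)
    (hconv : ConvexOn ℝ (Set.Icc xl xu ×ˢ Set.Icc yl yu) φ)
    (hunder : ∀ p ∈ Set.Icc xl xu ×ˢ Set.Icc yl yu, φ p ≤ p.1 * p.2) :
    ∀ p ∈ Set.Icc xl xu ×ˢ Set.Icc yl yu,
      φ p ≤ max (xl * p.2 + yl * p.1 - xl * yl) (xu * p.2 + yu * p.1 - xu * yu) := by
  intro p hp
  have hx : xl ≤ xu := hp.1.1.trans hp.1.2
  have hy : yl ≤ yu := hp.2.1.trans hp.2.2
  have hll : (xl, yl) ∈ Icc xl xu ×ˢ Icc yl yu := ⟨⟨le_rfl, hx⟩, le_rfl, hy⟩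
  have hul : (xu, yl) ∈ Icc xl xu ×ˢ Icc yl yu := ⟨⟨hx, le_rfl⟩, le_rfl, hy⟩
  have hlu : (xl, yu) ∈ Icc xl xu ×ˢ Icc yl yu := ⟨⟨le_rfl, hx⟩, hy, le_rfl⟩
  have huu : (xu, yu) ∈ Icc xl xu ×ˢ Icc yl yu := ⟨⟨hx, le_rfl⟩, hy, le_rfl⟩
  rcases Icc_prod_Icc_subset_convexHull_union_convexHull xl xu yl yu hp with h | h
  · exact le_max_of_le_left (hconv.le_tangentPlane_of_mem_convexHull hunder hll hul hlu h)
  · exact le_max_of_le_right (hconv.le_tangentPlane_of_mem_convexHull hunder huu hlu hul h)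

/-- The pointwise maximum of the two McCormick underestimators is the convex
envelope of the bilinear function `(x, y) ↦ x * y` over the box
`[xl, xu] × [yl, yu]`: any function that is convex on the box and
underestimates the product on the box is dominated by this maximum. -/
theorem mccormick_convex_envelope
    (xl xu yl yu : ℝ) (hx : xl ≤ xu) (hy : yl ≤ yu)
    (φ : ℝ × ℝ → ℝ)
    (hconv : ConvexOn ℝ (Set.Icc xl xu ×ˢ Set.Icc yl yu) φ)
    (hunder : ∀ p ∈ Set.Icc xl xu ×ˢ Set.Icc yl yu, φ p ≤ p.1 * p.2) :
    ∀ p ∈ Set.Icc xl xu ×ˢ Set.Icc yl yu,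
      φ p ≤ max (xl * p.2 + yl * p.1 - xl * yl) (xu * p.2 + yu * p.1 - xu * yu) :=
  mccormick_convex_envelope_general xl xu yl yu φ hconv hunder
end

section
/- Let ι be a finite index set, let l, u : ι → ℝ with l ≤ u componentwise, and let B = {x : ι → ℝ | ∀ i, l i ≤ x i ≤ u i} be the corresponding box. Let h : (ι → ℝ) → ℝ be edge-concave on B, i.e., for every i ∈ ι and every x ∈ B, the univariate function t ↦ h(update of x at coordinate i by t) is concave on [l i, u i]. Then for every x ∈ B there exists a vertex v of B (i.e., a point v ∈ B with v i ∈ {l i, u i} for every i) such that h(v) ≤ h(x). -/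
/-!
Fix the coordinates one at a time. Along each coordinate the function is concave on an interval,
so it attains its minimum over that interval at an endpoint; moving the current point to that
endpoint does not increase the value and keeps it in the box. After every coordinate has been
moved, the point is a vertex.
-/

open Function Set

section EdgeConcave

variable {𝕜 β : Type*} [Field 𝕜] [LinearOrder 𝕜] [IsStrictOrderedRing 𝕜]
  [AddCommGroup β] [LinearOrder β] [IsOrderedAddMonoid β] [Module 𝕜 β]
  [IsStrictOrderedModule 𝕜 β]

theorem ConcaveOn.exists_endpoint_le {f : 𝕜 → β} {a b x : 𝕜}
    (hf : ConcaveOn 𝕜 (Icc a b) f) (hx : x ∈ Icc a b) :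
    ∃ t, (t = a ∨ t = b) ∧ f t ≤ f x := by
  have hab : a ≤ b := hx.1.trans hx.2
  rcases min_le_iff.mp (hf.min_le_of_mem_Icc (left_mem_Icc.2 hab) (right_mem_Icc.2 hab) hx)
    with hfa | hfb
  exacts [⟨a, .inl rfl, hfa⟩, ⟨b, .inr rfl, hfb⟩]

section Box

variable {ι : Type*} [DecidableEq ι]

def EdgeConcaveOn (l u : ι → 𝕜) (h : (ι → 𝕜) → β) : Prop :=
  ∀ (i : ι) (x : ι → 𝕜), (∀ k, x k ∈ Icc (l k) (u k)) →
    ConcaveOn 𝕜 (Icc (l i) (u i)) (fun t => h (update x i t))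

variable {l u : ι → 𝕜} {h : (ι → 𝕜) → β}

theorem exists_update_endpoint_le
    (hec : EdgeConcaveOn l u h) {x : ι → 𝕜} (hx : ∀ k, x k ∈ Icc (l k) (u k)) (i : ι) :
    ∃ t, (t = l i ∨ t = u i) ∧ (∀ k, update x i t k ∈ Icc (l k) (u k)) ∧
      h (update x i t) ≤ h x := by
  obtain ⟨t, ht, hle⟩ := (hec i x hx).exists_endpoint_le (hx i)
  have hlu : l i ≤ u i := (hx i).1.trans (hx i).2
  refine ⟨t, ht, ?_, by simpa using hle⟩
  rw [forall_update_iff x fun k s => s ∈ Icc (l k) (u k)]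
  refine ⟨?_, fun k _ => hx k⟩
  rcases ht with rfl | rfl
  exacts [left_mem_Icc.2 hlu, right_mem_Icc.2 hlu]

theorem exists_endpoints_on_finset_le
    (hec : EdgeConcaveOn l u h) (s : Finset ι) {x : ι → 𝕜} (hx : ∀ k, x k ∈ Icc (l k) (u k)) :
    ∃ v : ι → 𝕜, (∀ k, v k ∈ Icc (l k) (u k)) ∧
      (∀ i ∈ s, v i = l i ∨ v i = u i) ∧ h v ≤ h x := by
  induction s using Finset.induction_on with
  | empty => exact ⟨x, hx, by simp, le_rfl⟩
  | insert a s _ ih =>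
    obtain ⟨v, hv, hvs, hvx⟩ := ih
    obtain ⟨t, ht, hw, hwv⟩ := exists_update_endpoint_le hec hv a
    refine ⟨update v a t, hw, fun i hi => ?_, hwv.trans hvx⟩
    rcases eq_or_ne i a with rfl | hia
    · simpa using ht
    · rw [update_of_ne hia]
      exact hvs i ((Finset.mem_insert.mp hi).resolve_left hia)

end Box

end EdgeConcave

theorem edge_concave_vertex_le_general
    {ι : Type*} [Fintype ι] [DecidableEq ι]
    (l u : ι → ℝ)
    (h : (ι → ℝ) → ℝ)
    (hec : ∀ (i : ι) (x : ι → ℝ), (∀ k, x k ∈ Set.Icc (l k) (u k)) →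
      ConcaveOn ℝ (Set.Icc (l i) (u i)) (fun t => h (Function.update x i t))) :
    ∀ x : ι → ℝ, (∀ k, x k ∈ Set.Icc (l k) (u k)) →
      ∃ v : ι → ℝ, (∀ k, v k ∈ Set.Icc (l k) (u k)) ∧
        (∀ i, v i = l i ∨ v i = u i) ∧ h v ≤ h x := by
  intro x hx
  obtain ⟨v, hv, hvert, hle⟩ := exists_endpoints_on_finset_le hec Finset.univ hx
  exact ⟨v, hv, fun i => hvert i (Finset.mem_univ i), hle⟩

/-- An edge-concave (componentwise concave) function on a box attains, for
every point of the box, a value at some vertex of the box that is at most the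
value at this point. -/
theorem edge_concave_vertex_le
    {ι : Type*} [Fintype ι] [DecidableEq ι]
    (l u : ι → ℝ) (hlu : ∀ i, l i ≤ u i)
    (h : (ι → ℝ) → ℝ)
    (hec : ∀ (i : ι) (x : ι → ℝ), (∀ k, x k ∈ Set.Icc (l k) (u k)) →
      ConcaveOn ℝ (Set.Icc (l i) (u i)) (fun t => h (Function.update x i t))) :
    ∀ x : ι → ℝ, (∀ k, x k ∈ Set.Icc (l k) (u k)) →
      ∃ v : ι → ℝ, (∀ k, v k ∈ Set.Icc (l k) (u k)) ∧
        (∀ i, v i = l i ∨ v i = u i) ∧ h v ≤ h x :=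
  edge_concave_vertex_le_general l u h hec
end

section
/- Let ι be a finite index set, let l, u : ι → ℝ with l ≤ u componentwise, and let B = {x : ι → ℝ | ∀ i, l i ≤ x i ≤ u i}. Let h : (ι → ℝ) → ℝ be edge-concave on B, i.e., for every i ∈ ι and every x ∈ B, the function t ↦ h(update of x at coordinate i by t) is concave on [l i, u i]. Let ℓ(x) = ∑_i α i · x i + γ be an affine function (α : ι → ℝ, γ ∈ ℝ) such that ℓ(v) ≤ h(v) for every vertex v of B (every v ∈ B with v i ∈ {l i, u i} for all i). Then ℓ(x) ≤ h(x) for every x ∈ B; that is, any affine function that underestimates an edge-concave function at all vertices of the box underestimates it on the entire box. -/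
/-!
Induct on the set `s` of coordinates allowed to lie strictly inside their interval. Freeing one
more coordinate `i` only moves points along an edge direction: there `h` is concave while the
affine function stays affine, so the difference `h - ℓ` is concave in `x i` and hence nonnegative
on `[l i, u i]` as soon as it is nonnegative at the two endpoints, which the induction hypothesis
provides.
-/

open Finset Function Set

theorem ConcaveOn.affine_le_of_mem_Icc {f : ℝ → ℝ} {a b c d t : ℝ}
    (hf : ConcaveOn ℝ (Icc a b) f) (ha : c * a + d ≤ f a) (hb : c * b + d ≤ f b)
    (ht : t ∈ Icc a b) : c * t + d ≤ f t := by
  have hab : a ≤ b := ht.1.trans ht.2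
  have hgap : ConcaveOn ℝ (Icc a b) (fun s => f s - (c * s + d)) :=
    hf.sub (((LinearMap.mul ℝ ℝ c).convexOn (convex_Icc a b)).add_const d)
  have hmin := hgap.min_le_of_mem_Icc (left_mem_Icc.2 hab) (right_mem_Icc.2 hab) ht
  linarith [le_min (sub_nonneg.2 ha) (sub_nonneg.2 hb)]

theorem sum_mul_update {ι : Type*} [Fintype ι] [DecidableEq ι] (α x : ι → ℝ) (i : ι) (t : ℝ) :
    ∑ j, α j * update x i t j = α i * t + ∑ j ∈ univ.erase i, α j * x j := by
  rw [← add_sum_erase _ _ (mem_univ i), update_self]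
  congr 1
  exact sum_congr rfl fun j hj => by rw [update_of_ne (ne_of_mem_erase hj)]

theorem affine_le_of_eq_endpoint_outside {ι : Type*} [Fintype ι] [DecidableEq ι]
    {l u : ι → ℝ} {h : (ι → ℝ) → ℝ}
    (hec : ∀ (i : ι) (x : ι → ℝ), (∀ k, x k ∈ Icc (l k) (u k)) →
      ConcaveOn ℝ (Icc (l i) (u i)) (fun t => h (update x i t)))
    {α : ι → ℝ} {γ : ℝ}
    (hvert : ∀ v : ι → ℝ, (∀ k, v k ∈ Icc (l k) (u k)) →
      (∀ i, v i = l i ∨ v i = u i) → (∑ i, α i * v i) + γ ≤ h v)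
    (s : Finset ι) {x : ι → ℝ} (hx : ∀ k, x k ∈ Icc (l k) (u k))
    (hxs : ∀ k ∉ s, x k = l k ∨ x k = u k) :
    (∑ i, α i * x i) + γ ≤ h x := by
  induction s using Finset.induction_on generalizing x with
  | empty => exact hvert x hx fun k => hxs k (notMem_empty k)
  | insert i s _ ih =>
    have hend : ∀ t, t = l i ∨ t = u i →
        α i * t + (∑ j ∈ univ.erase i, α j * x j + γ) ≤ h (update x i t) := by
      intro t ht
      have hlu : l i ≤ u i := (hx i).1.trans (hx i).2
      rw [← add_assoc, ← sum_mul_update]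
      refine ih ((forall_update_iff x fun k v => v ∈ Icc (l k) (u k)).2 ⟨?_, fun k _ => hx k⟩)
        ((forall_update_iff x fun k v => k ∉ s → v = l k ∨ v = u k).2 ⟨fun _ => ht, ?_⟩)
      · rcases ht with rfl | rfl
        exacts [left_mem_Icc.2 hlu, right_mem_Icc.2 hlu]
      · exact fun k hki hks => hxs k (by simp [hki, hks])
    have hline := (hec i x hx).affine_le_of_mem_Icc (hend _ (.inl rfl)) (hend _ (.inr rfl)) (hx i)
    rwa [update_eq_self, ← add_assoc, ← sum_mul_update, update_eq_self] at hline

theorem affine_underestimator_of_edge_concave_on_vertices_general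
    {ι : Type*} [Fintype ι] [DecidableEq ι]
    (l u : ι → ℝ)
    (h : (ι → ℝ) → ℝ)
    (hec : ∀ (i : ι) (x : ι → ℝ), (∀ k, x k ∈ Set.Icc (l k) (u k)) →
      ConcaveOn ℝ (Set.Icc (l i) (u i)) (fun t => h (Function.update x i t)))
    (α : ι → ℝ) (γ : ℝ)
    (hvert : ∀ v : ι → ℝ, (∀ k, v k ∈ Set.Icc (l k) (u k)) →
      (∀ i, v i = l i ∨ v i = u i) → (∑ i, α i * v i) + γ ≤ h v) :
    ∀ x : ι → ℝ, (∀ k, x k ∈ Set.Icc (l k) (u k)) →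
      (∑ i, α i * x i) + γ ≤ h x :=
  fun _ hx => affine_le_of_eq_endpoint_outside hec hvert univ hx
    fun k hk => (hk (Finset.mem_univ k)).elim

/-- Any affine function that underestimates an edge-concave function at all
vertices of a box underestimates it on the entire box. -/
theorem affine_underestimator_of_edge_concave_on_vertices
    {ι : Type*} [Fintype ι] [DecidableEq ι]
    (l u : ι → ℝ) (hlu : ∀ i, l i ≤ u i)
    (h : (ι → ℝ) → ℝ)
    (hec : ∀ (i : ι) (x : ι → ℝ), (∀ k, x k ∈ Set.Icc (l k) (u k)) →
      ConcaveOn ℝ (Set.Icc (l i) (u i)) (fun t => h (Function.update x i t)))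
    (α : ι → ℝ) (γ : ℝ)
    (hvert : ∀ v : ι → ℝ, (∀ k, v k ∈ Set.Icc (l k) (u k)) →
      (∀ i, v i = l i ∨ v i = u i) → (∑ i, α i * v i) + γ ≤ h v) :
    ∀ x : ι → ℝ, (∀ k, x k ∈ Set.Icc (l k) (u k)) →
      (∑ i, α i * x i) + γ ≤ h x :=
  affine_underestimator_of_edge_concave_on_vertices_general l u h hec α γ hvert
end

section
/- Let n ∈ ℕ, j ∈ {1,…,n}, and let l, u : Fin n → ℝ with l ≤ u componentwise. Let g : (Fin n → ℝ) → ℝ and ḡ ∈ ℝ, and suppose that for every x in the box (∀ i, l i ≤ x i ≤ u i), the univariate function t ↦ g(update of x at coordinate j by t) is convex on [l j, u j]. Let S = {x | (∀ i, l i ≤ x i ≤ u i) ∧ ḡ ≤ g(x)}. Then for every x ∈ S there exists x' ∈ S that differs from x only in coordinate j and satisfies x'_j ∈ {l j, u j}. Consequently, for any cost vector c : Fin n → ℝ with c j = 0, if x* minimizes cᵀx over S, then there exists an optimal solution x' of min{cᵀx : x ∈ S} with x'_j ∈ {l j, u j}. -/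
/-!
A convex function on an interval attains its maximum over the interval at an endpoint. So moving
the coordinate `x j` of a feasible point to the better of its two bounds keeps the box constraints
and can only increase `g`; since `c j = 0`, the objective does not change.
-/

open Function Set

theorem ConvexOn.exists_endpoint_ge_of_mem_Icc {f : ℝ → ℝ} {a b x : ℝ}
    (hf : ConvexOn ℝ (Icc a b) f) (hx : x ∈ Icc a b) : ∃ t, (t = a ∨ t = b) ∧ f x ≤ f t := by
  have hab : a ≤ b := hx.1.trans hx.2
  rcases le_max_iff.mp (hf.le_max_of_mem_Icc (left_mem_Icc.mpr hab) (right_mem_Icc.mpr hab) hx)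
    with h | h
  · exact ⟨a, .inl rfl, h⟩
  · exact ⟨b, .inr rfl, h⟩

section Box

variable {ι : Type*} [DecidableEq ι] {l u x : ι → ℝ} {j : ι} {t : ℝ}

theorem update_mem_box (hx : ∀ i, l i ≤ x i ∧ x i ≤ u i) (ht : t ∈ Icc (l j) (u j)) :
    ∀ i, l i ≤ update x j t i ∧ update x j t i ≤ u i := by
  intro i
  rcases eq_or_ne i j with rfl | hij
  · simpa using ht
  · simpa [update_of_ne hij] using hx i

theorem exists_endpoint_update_feasible {g : (ι → ℝ) → ℝ} {gbar : ℝ}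
    (hx : ∀ i, l i ≤ x i ∧ x i ≤ u i) (hgx : gbar ≤ g x)
    (hconv : ConvexOn ℝ (Icc (l j) (u j)) fun t => g (update x j t)) :
    ∃ t, (t = l j ∨ t = u j) ∧
      (∀ i, l i ≤ update x j t i ∧ update x j t i ≤ u i) ∧ gbar ≤ g (update x j t) := by
  obtain ⟨t, ht, hle⟩ := hconv.exists_endpoint_ge_of_mem_Icc (hx j)
  have hlu : l j ≤ u j := (hx j).1.trans (hx j).2
  refine ⟨t, ht, update_mem_box hx ?_, ?_⟩
  · rcases ht with rfl | rfl
    exacts [left_mem_Icc.mpr hlu, right_mem_Icc.mpr hlu]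
  · rw [update_eq_self] at hle
    exact hgx.trans hle

theorem sum_mul_update_of_eq_zero [Fintype ι] {c : ι → ℝ} (hc : c j = 0) :
    ∑ i, c i * update x j t i = ∑ i, c i * x i := by
  refine Finset.sum_congr rfl fun i _ => ?_
  rcases eq_or_ne i j with rfl | hij
  · simp [hc]
  · rw [update_of_ne hij]

end Box

theorem variable_fixing_convex_single_constraint_general
    (n : ℕ) (j : Fin n) (l u : Fin n → ℝ)
    (g : (Fin n → ℝ) → ℝ) (gbar : ℝ)
    (hconv : ∀ x : Fin n → ℝ, (∀ i, l i ≤ x i ∧ x i ≤ u i) →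
      ConvexOn ℝ (Set.Icc (l j) (u j)) (fun t => g (Function.update x j t)))
    (S : Set (Fin n → ℝ))
    (hS : S = {x | (∀ i, l i ≤ x i ∧ x i ≤ u i) ∧ gbar ≤ g x}) :
    (∀ x ∈ S, ∃ x' ∈ S, (∀ i, i ≠ j → x' i = x i) ∧ (x' j = l j ∨ x' j = u j)) ∧
    (∀ c : Fin n → ℝ, c j = 0 →
      ∀ xstar ∈ S, (∀ x ∈ S, ∑ i, c i * xstar i ≤ ∑ i, c i * x i) →
        ∃ x' ∈ S, (∀ x ∈ S, ∑ i, c i * x' i ≤ ∑ i, c i * x i) ∧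
          (x' j = l j ∨ x' j = u j)) := by
  have endpoint : ∀ x ∈ S, ∃ t, (t = l j ∨ t = u j) ∧ update x j t ∈ S := by
    subst hS
    rintro x ⟨hx, hgx⟩
    obtain ⟨t, ht, hbox, hg⟩ := exists_endpoint_update_feasible hx hgx (hconv x hx)
    exact ⟨t, ht, hbox, hg⟩
  refine ⟨fun x hx => ?_, fun c hc xstar hxstar hopt => ?_⟩
  · obtain ⟨t, ht, hmem⟩ := endpoint x hx
    exact ⟨_, hmem, fun i hi => update_of_ne hi _ _, by simpa only [update_self] using ht⟩
  · obtain ⟨t, ht, hmem⟩ := endpoint xstar hxstar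
    refine ⟨_, hmem, ?_, by simpa only [update_self] using ht⟩
    rw [sum_mul_update_of_eq_zero hc]
    exact hopt

/-- If a bounded variable `x j` does not appear in the objective but only in a
single one-sided constraint `gbar ≤ g x` where `g` is convex in `x j` for every
fixing of the other variables, then every feasible point can be modified, only
in coordinate `j`, to a feasible point with `x j` at one of its bounds; in
particular there always exists an optimal solution with `x j ∈ {l j, u j}`. -/
theorem variable_fixing_convex_single_constraint
    (n : ℕ) (j : Fin n) (l u : Fin n → ℝ) (hlu : ∀ i, l i ≤ u i)
    (g : (Fin n → ℝ) → ℝ) (gbar : ℝ)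
    (hconv : ∀ x : Fin n → ℝ, (∀ i, l i ≤ x i ∧ x i ≤ u i) →
      ConvexOn ℝ (Set.Icc (l j) (u j)) (fun t => g (Function.update x j t)))
    (S : Set (Fin n → ℝ))
    (hS : S = {x | (∀ i, l i ≤ x i ∧ x i ≤ u i) ∧ gbar ≤ g x}) :
    (∀ x ∈ S, ∃ x' ∈ S, (∀ i, i ≠ j → x' i = x i) ∧ (x' j = l j ∨ x' j = u j)) ∧
    (∀ c : Fin n → ℝ, c j = 0 →
      ∀ xstar ∈ S, (∀ x ∈ S, ∑ i, c i * xstar i ≤ ∑ i, c i * x i) →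
        ∃ x' ∈ S, (∀ x ∈ S, ∑ i, c i * x' i ≤ ∑ i, c i * x i) ∧
          (x' j = l j ∨ x' j = u j)) :=
  variable_fixing_convex_single_constraint_general n j l u g gbar hconv S hS
end

section
/- Let k ≥ 1, s : Fin k → ℝ, and r ∈ ℝ. Then √(∑_{j} s_j²) ≤ r if and only if there exists z : Fin k → ℝ with z_j ≥ 0 for all j, s_j² ≤ z_j · r for all j, and ∑_j z_j ≤ r. In other words, a point satisfies the second-order cone constraint exactly when it can be extended by nonnegative disaggregation variables satisfying the rotated-cone constraints and the aggregation inequality; in particular, any point violating the second-order cone constraint must violate one of the disaggregated constraints for every choice of nonnegative z. -/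
open Finset

section Disaggregation

variable {ι : Type*} [Fintype ι] {s z : ι → ℝ} {r : ℝ}

/-- For `r > 0` the witness is `z j = s j ^ 2 / r`; for `r = 0` every `s j` vanishes and
the same formula gives `z = 0`, thanks to `x / 0 = 0`. -/
theorem exists_disaggregation_of_sum_sq_le_sq (hr : 0 ≤ r) (h : ∑ j, s j ^ 2 ≤ r ^ 2) :
    ∃ z : ι → ℝ, (∀ j, 0 ≤ z j) ∧ (∀ j, s j ^ 2 ≤ z j * r) ∧ ∑ j, z j ≤ r := by
  refine ⟨fun j => s j ^ 2 / r, fun j => by positivity, fun j => ?_, ?_⟩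
  · obtain rfl | hr := hr.eq_or_lt
    · simpa using (single_le_sum (fun i _ => sq_nonneg (s i)) (mem_univ j)).trans h
    · rw [div_mul_cancel₀ _ hr.ne']
  · rw [← sum_div]
    exact div_le_of_le_mul₀ hr hr (by rwa [← sq])

theorem sum_sq_le_sq_of_disaggregation (hz : ∀ j, 0 ≤ z j) (hsz : ∀ j, s j ^ 2 ≤ z j * r)
    (hzr : ∑ j, z j ≤ r) : 0 ≤ r ∧ ∑ j, s j ^ 2 ≤ r ^ 2 := by
  have hr : 0 ≤ r := (sum_nonneg fun j _ => hz j).trans hzr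
  refine ⟨hr, ?_⟩
  calc ∑ j, s j ^ 2 ≤ ∑ j, z j * r := sum_le_sum fun j _ => hsz j
    _ = (∑ j, z j) * r := (sum_mul ..).symm
    _ ≤ r * r := mul_le_mul_of_nonneg_right hzr hr
    _ = r ^ 2 := (sq r).symm

end Disaggregation

theorem soc_disaggregation_general
    (k : ℕ) (s : Fin k → ℝ) (r : ℝ) :
    Real.sqrt (∑ j, s j ^ 2) ≤ r ↔
      ∃ z : Fin k → ℝ, (∀ j, 0 ≤ z j) ∧ (∀ j, s j ^ 2 ≤ z j * r) ∧
        (∑ j, z j) ≤ r := by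
  rw [Real.sqrt_le_iff]
  exact ⟨fun ⟨hr, h⟩ => exists_disaggregation_of_sum_sq_le_sq hr h,
    fun ⟨_, hz, hsz, hzr⟩ => sum_sq_le_sq_of_disaggregation hz hsz hzr⟩

/-- Disaggregation of a second-order cone: `√(∑ s_j²) ≤ r` holds exactly when
there are nonnegative disaggregation variables `z` with `s_j² ≤ z_j r` for all
`j` and `∑ z_j ≤ r`. -/
theorem soc_disaggregation
    (k : ℕ) (hk : 1 ≤ k) (s : Fin k → ℝ) (r : ℝ) :
    Real.sqrt (∑ j, s j ^ 2) ≤ r ↔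
      ∃ z : Fin k → ℝ, (∀ j, 0 ≤ z j) ∧ (∀ j, s j ^ 2 ≤ z j * r) ∧
        (∑ j, z j) ≤ r :=
  soc_disaggregation_general k s r
end

section
/- Let p, q ∈ ℕ, let h_nl, ℓ_nl : (Fin p → ℝ) → ℝ and h_l : (Fin q → ℝ) → ℝ be functions, and let u⁰ ∈ (Fin p → ℝ). Assume ℓ_nl(u) ≤ h_nl(u) for all u ∈ Fin p → ℝ. Then for all u : Fin p → ℝ, v : Fin q → ℝ, and y ∈ ℝ with y ∈ {0, 1} and (y = 0 → u = u⁰), the perspective-strengthened estimator satisfies ℓ_nl(u) + (h_nl(u⁰) − ℓ_nl(u⁰))·(1 − y) + h_l(v) ≤ h_nl(u) + h_l(v), with equality whenever y = 0. Moreover, when y = 1 the strengthened estimator coincides with the original estimator ℓ_nl(u) + h_l(v). -/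
section PerspectiveStrengthening

variable {α R : Type*} [Ring R] {h ℓ : α → R} {u u0 : α} {y : R}

theorem perspective_add_eq_of_indicator_eq_zero (hy : y = 0) (hu : u = u0) :
    ℓ u + (h u0 - ℓ u0) * (1 - y) = h u := by
  rw [hy, hu, sub_zero, mul_one, add_sub_cancel]

theorem perspective_add_eq_of_indicator_eq_one (hy : y = 1) :
    ℓ u + (h u0 - ℓ u0) * (1 - y) = ℓ u := by
  rw [hy, sub_self, mul_zero, add_zero]

theorem perspective_add_le [Preorder R] (hunder : ℓ u ≤ h u) (hy : y = 0 ∨ y = 1)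
    (hsc : y = 0 → u = u0) :
    ℓ u + (h u0 - ℓ u0) * (1 - y) ≤ h u := by
  rcases hy with hy0 | hy1
  · exact (perspective_add_eq_of_indicator_eq_zero hy0 (hsc hy0)).le
  · rwa [perspective_add_eq_of_indicator_eq_one hy1]

end PerspectiveStrengthening

/-- Perspective strengthening: if `ℓnl` underestimates `hnl` everywhere and the
variables `u` are semi-continuous with respect to the binary indicator `y`
(taking the value `u0` when `y = 0`), then the strengthened estimator
`ℓnl(u) + (hnl(u0) − ℓnl(u0))(1 − y) + hl(v)` underestimates
`hnl(u) + hl(v)`, is tight whenever `y = 0`, and coincides with the original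
estimator `ℓnl(u) + hl(v)` when `y = 1`. -/
theorem perspective_strengthening
    (p q : ℕ)
    (hnl ℓnl : (Fin p → ℝ) → ℝ) (hl : (Fin q → ℝ) → ℝ)
    (u0 : Fin p → ℝ)
    (hunder : ∀ u, ℓnl u ≤ hnl u) :
    ∀ (u : Fin p → ℝ) (v : Fin q → ℝ) (y : ℝ),
      (y = 0 ∨ y = 1) → (y = 0 → u = u0) →
      (ℓnl u + (hnl u0 - ℓnl u0) * (1 - y) + hl v ≤ hnl u + hl v) ∧
      (y = 0 → ℓnl u + (hnl u0 - ℓnl u0) * (1 - y) + hl v = hnl u + hl v) ∧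
      (y = 1 → ℓnl u + (hnl u0 - ℓnl u0) * (1 - y) + hl v = ℓnl u + hl v) := by
  intro u v y hy hsc
  refine ⟨?_, fun hy0 => ?_, fun hy1 => ?_⟩
  · exact add_le_add_left (perspective_add_le (hunder u) hy hsc) (hl v)
  · rw [perspective_add_eq_of_indicator_eq_zero hy0 (hsc hy0)]
  · rw [perspective_add_eq_of_indicator_eq_one hy1]
end

section
/- For all real numbers x̂, x, y, w such that x² ≤ w, y ∈ {0, 1}, and (y = 0 → x = 0), the perspective-strengthened gradient cut x̂² + 2·x̂·(x − x̂) + x̂²·(1 − y) ≤ w holds. -/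
theorem sq_add_two_mul_mul_sub_le_sq (a x : ℝ) : a ^ 2 + 2 * a * (x - a) ≤ x ^ 2 := by
  linarith [two_mul_le_add_sq a x]

/-- The perspective-strengthened gradient cut for the set
`{(x, y, w) : x² ≤ w, y ∈ {0,1}, y = 0 → x = 0}` is valid. -/
theorem perspective_gradient_cut_valid
    (xhat x y w : ℝ) (hxw : x ^ 2 ≤ w) (hy : y = 0 ∨ y = 1)
    (hsemi : y = 0 → x = 0) :
    xhat ^ 2 + 2 * xhat * (x - xhat) + xhat ^ 2 * (1 - y) ≤ w := by
  rcases hy with rfl | rfl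
  · obtain rfl := hsemi rfl
    calc xhat ^ 2 + 2 * xhat * (0 - xhat) + xhat ^ 2 * (1 - 0) = (0 : ℝ) ^ 2 := by ring
      _ ≤ w := hxw
  · calc xhat ^ 2 + 2 * xhat * (x - xhat) + xhat ^ 2 * (1 - 1)
        = xhat ^ 2 + 2 * xhat * (x - xhat) := by ring
      _ ≤ x ^ 2 := sq_add_two_mul_mul_sub_le_sq xhat x
      _ ≤ w := hxw
end

section
/- Let D ∈ ℝ^{ℓ×n}, d ∈ ℝ^ℓ, c ∈ ℝⁿ, U ∈ ℝ, and fix an index k ∈ {1,…,n}. Let λ ∈ ℝ^ℓ with λ ≥ 0 and μ ∈ ℝ with μ ≥ 0, and define r = e_k − Dᵀλ − μ·c ∈ ℝⁿ. Let l, u ∈ ℝⁿ. Then for every x ∈ ℝⁿ satisfying Dx ≤ d, cᵀx ≤ U, and l ≤ x ≤ u componentwise, it holds that x_k ≤ ∑_{j : r_j < 0} r_j·l_j + ∑_{j : r_j > 0} r_j·u_j + λᵀd + μ·U. -/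
/-!
Weak duality, variable by variable: `x_k = rᵀx + λᵀ(Dx) + μ cᵀx` holds identically by the
definition of `r`; the last two terms are at most `λᵀd + μU` because the multipliers are
nonnegative, and each term `r_j x_j` of `rᵀx` is at most `r_j l_j` or `r_j u_j` according
to the sign of `r_j`.
-/

open Matrix

namespace Matrix

variable {m n R : Type*} [Fintype m] [Fintype n]

def reducedCost [CommRing R] [DecidableEq n] (D : Matrix m n R) (c : n → R) (k : n)
    (lam : m → R) (μ : R) : n → R :=
  Pi.single k 1 - Dᵀ *ᵥ lam - μ • c

theorem reducedCost_dotProduct [CommRing R] [DecidableEq n] (D : Matrix m n R) (c : n → R)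
    (k : n) (lam : m → R) (μ : R) (x : n → R) :
    reducedCost D c k lam μ ⬝ᵥ x = x k - lam ⬝ᵥ (D *ᵥ x) - μ * (c ⬝ᵥ x) := by
  rw [reducedCost, sub_dotProduct, sub_dotProduct, single_dotProduct, one_mul,
    smul_dotProduct, smul_eq_mul, mulVec_transpose, dotProduct_mulVec]

end Matrix

section BoxBound

variable {ι R : Type*} [Ring R] [LinearOrder R] [IsOrderedRing R]

theorem mul_le_ite_neg_add_ite_pos {a lo up x : R} (hx : x ∈ Set.Icc lo up) :
    a * x ≤ (if a < 0 then a * lo else 0) + (if 0 < a then a * up else 0) := by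
  rcases lt_trichotomy a 0 with ha | rfl | ha
  · simpa [ha, ha.not_gt] using mul_le_mul_of_nonpos_left hx.1 ha.le
  · simp
  · simpa [ha, ha.not_gt] using mul_le_mul_of_nonneg_left hx.2 ha.le

theorem dotProduct_le_of_mem_Icc [Fintype ι] {r lo up x : ι → R} (hx : x ∈ Set.Icc lo up) :
    r ⬝ᵥ x ≤ (∑ j ∈ Finset.univ.filter (fun j => r j < 0), r j * lo j) +
      (∑ j ∈ Finset.univ.filter (fun j => 0 < r j), r j * up j) := by
  rw [Finset.sum_filter, Finset.sum_filter, ← Finset.sum_add_distrib]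
  exact Finset.sum_le_sum fun j _ => mul_le_ite_neg_add_ite_pos ⟨hx.1 j, hx.2 j⟩

end BoxBound

/-- Propagation of a Lagrangian variable bound over the variable bounds:
for dual multipliers `lam ≥ 0`, `μ ≥ 0` and the reduced cost vector
`r = e_k − Dᵀ lam − μ c`, every `x` with `Dx ≤ d`, `cᵀx ≤ U`, and
`lo ≤ x ≤ up` satisfies
`x_k ≤ ∑_{j : r_j < 0} r_j lo_j + ∑_{j : r_j > 0} r_j up_j + lamᵀd + μ U`. -/
theorem lagrangian_variable_bound_propagation
    (ℓ n : ℕ) (D : Matrix (Fin ℓ) (Fin n) ℝ) (d : Fin ℓ → ℝ)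
    (c : Fin n → ℝ) (U : ℝ) (k : Fin n)
    (lam : Fin ℓ → ℝ) (hlam : ∀ i, 0 ≤ lam i)
    (μ : ℝ) (hμ : 0 ≤ μ)
    (r : Fin n → ℝ)
    (hr : ∀ j, r j = (if j = k then (1 : ℝ) else 0) - (Dᵀ *ᵥ lam) j - μ * c j)
    (lo up : Fin n → ℝ) :
    ∀ x : Fin n → ℝ, (∀ i, (D *ᵥ x) i ≤ d i) → c ⬝ᵥ x ≤ U →
      (∀ j, lo j ≤ x j ∧ x j ≤ up j) →
      x k ≤ (∑ j ∈ Finset.univ.filter (fun j => r j < 0), r j * lo j) +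
            (∑ j ∈ Finset.univ.filter (fun j => 0 < r j), r j * up j) +
            lam ⬝ᵥ d + μ * U := by
  intro x hDx hcx hlu
  have hr_eq : r = reducedCost D c k lam μ :=
    funext fun j => by simp [hr, reducedCost, Pi.single_apply]
  have hbox : x ∈ Set.Icc lo up := ⟨fun j => (hlu j).1, fun j => (hlu j).2⟩
  calc x k = r ⬝ᵥ x + lam ⬝ᵥ (D *ᵥ x) + μ * (c ⬝ᵥ x) := by
        rw [hr_eq, reducedCost_dotProduct]; ring
    _ ≤ _ := by
      gcongr
      · exact dotProduct_le_of_mem_Icc hbox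
      · exact dotProduct_le_dotProduct_of_nonneg_left (fun i => hDx i) hlam
end

section
/- Let a, b, c, d, e, l, u be real numbers with l ≤ u, and define f : ℝ → ℝ by f(y) = (a·y + b)/(c·y + d) + e. If c·y + d ≠ 0 for every y ∈ [l, u], then f is convex on [l, u] or f is concave on [l, u]. -/
/-! The Jensen gap `p g(x) + q g(y) - g(p x + q y)` of `g y = (a y + b)/(c y + d)` equals
`p q c (b c - a d) (x - y)² / (D(x) D(y) D(p x + q y))` with `D y = c y + d`. By the intermediate
value theorem `D` has constant sign on the interval, so the sign of `c (b c - a d)` decides between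
convexity and concavity; negating all four coefficients reduces a negative denominator to a
positive one. -/

theorem IsPreconnected.forall_pos_or_forall_neg {X α : Type*} [TopologicalSpace X]
    [LinearOrder α] [TopologicalSpace α] [OrderClosedTopology α] [Zero α]
    {s : Set X} {f : X → α} (hs : IsPreconnected s) (hf : ContinuousOn f s)
    (hf₀ : ∀ x ∈ s, f x ≠ 0) : (∀ x ∈ s, 0 < f x) ∨ (∀ x ∈ s, f x < 0) := by
  by_contra! h
  obtain ⟨⟨x, hx, hfx⟩, ⟨y, hy, hfy⟩⟩ := h
  obtain ⟨z, hz, hfz⟩ := hs.intermediate_value hx hy hf ⟨hfx, hfy⟩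
  exact hf₀ z hz hfz

section DivAffine

variable {a b c d : ℝ} {s : Set ℝ}

theorem div_affine_jensen_gap {x y p q : ℝ} (hpq : p + q = 1)
    (hx : c * x + d ≠ 0) (hy : c * y + d ≠ 0) (hz : c * (p * x + q * y) + d ≠ 0) :
    p * ((a * x + b) / (c * x + d)) + q * ((a * y + b) / (c * y + d))
        - (a * (p * x + q * y) + b) / (c * (p * x + q * y) + d)
      = p * q * (c * (b * c - a * d)) * (x - y) ^ 2
        / ((c * x + d) * (c * y + d) * (c * (p * x + q * y) + d)) := by
  rw [mul_div_assoc', mul_div_assoc', div_add_div _ _ hx hy,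
    div_sub_div _ _ (mul_ne_zero hx hy) hz, div_left_inj' (mul_ne_zero (mul_ne_zero hx hy) hz)]
  obtain rfl : q = 1 - p := by linarith
  ring

theorem convexOn_div_affine (hs : Convex ℝ s) (hden : ∀ y ∈ s, 0 < c * y + d)
    (hk : 0 ≤ c * (b * c - a * d)) :
    ConvexOn ℝ s fun y => (a * y + b) / (c * y + d) := by
  refine ⟨hs, fun x hx y hy p q hp hq hpq => ?_⟩
  have hDx := hden x hx
  have hDy := hden y hy
  have hDz := hden _ (hs hx hy hp hq hpq)
  simp only [smul_eq_mul] at hDz ⊢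
  rw [← sub_nonneg, div_affine_jensen_gap hpq hDx.ne' hDy.ne' hDz.ne']
  positivity

theorem concaveOn_div_affine (hs : Convex ℝ s) (hden : ∀ y ∈ s, 0 < c * y + d)
    (hk : c * (b * c - a * d) ≤ 0) :
    ConcaveOn ℝ s fun y => (a * y + b) / (c * y + d) := by
  have hneg : (fun y => (a * y + b) / (c * y + d)) = -fun y => (-a * y + -b) / (c * y + d) := by
    ext y
    rw [Pi.neg_apply, ← neg_div]
    ring
  rw [hneg]
  exact (convexOn_div_affine hs hden (by linarith)).neg

theorem convexOn_or_concaveOn_div_affine_of_pos (hs : Convex ℝ s)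
    (hden : ∀ y ∈ s, 0 < c * y + d) :
    (ConvexOn ℝ s fun y => (a * y + b) / (c * y + d)) ∨
      ConcaveOn ℝ s fun y => (a * y + b) / (c * y + d) :=
  (le_total 0 (c * (b * c - a * d))).imp (convexOn_div_affine hs hden)
    (concaveOn_div_affine hs hden)

theorem convexOn_or_concaveOn_div_affine (hs : Convex ℝ s)
    (hden : ∀ y ∈ s, c * y + d ≠ 0) :
    (ConvexOn ℝ s fun y => (a * y + b) / (c * y + d)) ∨
      ConcaveOn ℝ s fun y => (a * y + b) / (c * y + d) := by
  rcases hs.isPreconnected.forall_pos_or_forall_neg (by fun_prop) hden with hpos | hneg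
  · exact convexOn_or_concaveOn_div_affine_of_pos hs hpos
  · have hneg_coeffs : (fun y => (a * y + b) / (c * y + d))
        = fun y => (-a * y + -b) / (-c * y + -d) := by
      ext y
      rw [← neg_div_neg_eq]
      ring
    rw [hneg_coeffs]
    exact convexOn_or_concaveOn_div_affine_of_pos hs fun y hy => by linarith [hneg y hy]

end DivAffine

theorem univariate_quotient_convex_or_concave_general
    (a b c d e l u : ℝ)
    (hden : ∀ y ∈ Set.Icc l u, c * y + d ≠ 0) :
    ConvexOn ℝ (Set.Icc l u) (fun y => (a * y + b) / (c * y + d) + e) ∨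
    ConcaveOn ℝ (Set.Icc l u) (fun y => (a * y + b) / (c * y + d) + e) :=
  (convexOn_or_concaveOn_div_affine (convex_Icc l u) hden).imp (·.add_const e) (·.add_const e)

/-- The univariate fractional function `y ↦ (a y + b)/(c y + d) + e` is convex
or concave on any interval `[l, u]` on which its denominator does not
vanish. -/
theorem univariate_quotient_convex_or_concave
    (a b c d e l u : ℝ) (hlu : l ≤ u)
    (hden : ∀ y ∈ Set.Icc l u, c * y + d ≠ 0) :
    ConvexOn ℝ (Set.Icc l u) (fun y => (a * y + b) / (c * y + d) + e) ∨
    ConcaveOn ℝ (Set.Icc l u) (fun y => (a * y + b) / (c * y + d) + e) :=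
  univariate_quotient_convex_or_concave_general a b c d e l u hden
end

section
/- Let E be a real normed vector space, let C ⊆ E be convex, let x̂ be in the interior of C, and let S ⊆ E be a set with S ∩ interior(C) = ∅. Let ι be a finite index set, let r : ι → E be ray directions, and let t : ι → ℝ with t j > 0 and x̂ + (t j) • (r j) ∈ C for every j ∈ ι. Then for every λ : ι → ℝ with λ j ≥ 0 for all j and ∑_j λ j / t j < 1, the point x̂ + ∑_j (λ j) • (r j) lies in the interior of C; in particular it does not belong to S. Equivalently, the intersection cut ∑_j λ j / t j ≥ 1 is valid for every point of S of the form x̂ + ∑_j (λ j) • (r j) with λ ≥ 0, while it is violated by x̂ itself. -/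
/-!
The point `x̂ + ∑ λⱼ rⱼ` equals `x̂ + ∑ μⱼ (yⱼ - x̂)` with `yⱼ = x̂ + tⱼ rⱼ ∈ C` and
`μⱼ = λⱼ / tⱼ ≥ 0`. When `s = ∑ μⱼ > 0` this is `(1 - s) x̂ + s z` with `z` the centre of mass
of the `yⱼ` with weights `μⱼ`, which lies in `C` by convexity; as `1 - s > 0` and `x̂` is
interior, the whole combination is interior.
-/

open Finset

theorem Finset.add_sum_smul_sub_eq_centerMass_combo {ι 𝕜 E : Type*} [Field 𝕜] [AddCommGroup E]
    [Module 𝕜 E] (t : Finset ι) {w : ι → 𝕜} (hw : ∑ i ∈ t, w i ≠ 0) (x : E) (y : ι → E) :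
    x + ∑ i ∈ t, w i • (y i - x) =
      (1 - ∑ i ∈ t, w i) • x + (∑ i ∈ t, w i) • t.centerMass w y := by
  simp only [centerMass, smul_smul, mul_inv_cancel₀ hw, one_smul, smul_sub, sum_sub_distrib,
    ← sum_smul]
  module

theorem Convex.add_sum_smul_sub_mem_interior {ι 𝕜 E : Type*} [Field 𝕜] [LinearOrder 𝕜]
    [IsStrictOrderedRing 𝕜] [AddCommGroup E] [Module 𝕜 E] [TopologicalSpace E]
    [IsTopologicalAddGroup E] [ContinuousConstSMul 𝕜 E] {s : Set E} (hs : Convex 𝕜 s) {x : E}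
    (hx : x ∈ interior s) {t : Finset ι} {w : ι → 𝕜} {y : ι → E} (hw₀ : ∀ i ∈ t, 0 ≤ w i)
    (hw₁ : ∑ i ∈ t, w i < 1) (hy : ∀ i ∈ t, y i ∈ s) :
    x + ∑ i ∈ t, w i • (y i - x) ∈ interior s := by
  rcases (sum_nonneg hw₀).eq_or_lt with hzero | hpos
  · have hw : ∀ i ∈ t, w i = 0 := (sum_eq_zero_iff_of_nonneg hw₀).1 hzero.symm
    rwa [sum_eq_zero fun i hi => by rw [hw i hi, zero_smul], add_zero]
  · rw [t.add_sum_smul_sub_eq_centerMass_combo hpos.ne' x y]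
    exact hs.combo_interior_self_mem_interior hx (hs.centerMass_mem hw₀ hpos hy)
      (sub_pos.2 hw₁) hpos.le (sub_add_cancel _ _)

/-- Validity of intersection cuts: if `C` is an `S`-free convex set containing
`xhat` in its interior, and along each extreme ray direction `r j` a step length
`t j > 0` with `xhat + t j • r j ∈ C` is given, then every point
`xhat + ∑ j, λ j • r j` of the cone with `λ ≥ 0` violating the intersection cut,
i.e., with `∑ j, λ j / t j < 1`, lies in the interior of `C` and hence does not
belong to `S`. -/
theorem intersection_cut_valid
    {E : Type*} [NormedAddCommGroup E] [NormedSpace ℝ E]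
    {ι : Type*} [Fintype ι]
    (C : Set E) (hC : Convex ℝ C)
    (xhat : E) (hxhat : xhat ∈ interior C)
    (S : Set E) (hS : S ∩ interior C = ∅)
    (r : ι → E) (t : ι → ℝ) (ht : ∀ j, 0 < t j)
    (hray : ∀ j, xhat + t j • r j ∈ C) :
    ∀ lam : ι → ℝ, (∀ j, 0 ≤ lam j) → (∑ j, lam j / t j) < 1 →
      (xhat + ∑ j, lam j • r j) ∈ interior C ∧ (xhat + ∑ j, lam j • r j) ∉ S := by
  intro lam hlam hcut
  have hinterior : xhat + ∑ j, lam j • r j ∈ interior C := by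
    have hstep : ∀ j, (lam j / t j) • (xhat + t j • r j - xhat) = lam j • r j := fun j => by
      rw [add_sub_cancel_left, smul_smul, div_mul_cancel₀ _ (ht j).ne']
    simpa only [hstep] using hC.add_sum_smul_sub_mem_interior hxhat
      (fun j _ => div_nonneg (hlam j) (ht j).le) hcut (fun j _ => hray j)
  exact ⟨hinterior, fun hmem => hS.subset ⟨hmem, hinterior⟩⟩
end
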